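/- Suppose Φ₁, Φ₀, Φ₋₁ and φ are smooth complex fields and A = (A₀,A₁,A₂,A₃) a smooth real gauge potential on the Reissner–Nordström exterior satisfying the compacted Maxwell–Higgs system: N Φ₁ = V·M Φ₀ + i f (D₂φ·φ̄ − φ·conj(D₂φ)) + i (f/sin θ)(D₃φ·φ̄ − φ·conj(D₃φ)); L Φ₀ = M̄ Φ₁ + i r² (D₀φ·φ̄ − φ·conj(D₀φ)) + i r² (D₁φ·φ̄ − φ·conj(D₁φ)); N Φ₀ = −M₁ Φ₋₁ + i r² (D₀φ·φ̄ − φ·conj(D₀φ)) + i r² (D₁φ·φ̄ − φ·conj(D₁φ)); L Φ₋₁ = V·M̄ Φ₀ + i f (D₂φ·φ̄ − φ·conj(D₂φ)) + i (f/sin θ)(D₃φ·φ̄ − φ·conj(D₃φ)). Then the middle component Φ₀ satisfies the wave-like equation □̃Φ₀ = ρ(φ, φ̄), i.e. ∂²_t Φ₀ − ∂²_{r_*} Φ₀ + V·Δ_S Φ₀ = ρ(φ, φ̄). -/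

import Mathlib

noncomputable section

open Real MeasureTheory

/-- A (complex) field on the Reissner–Nordström exterior, as a function of
coordinates `(t, r_*, θ, ϕ)`. -/
abbrev CField : Type := ℝ → ℝ → ℝ → ℝ → ℂ

/-- A real field on the Reissner–Nordström exterior. -/
abbrev RField : Type := ℝ → ℝ → ℝ → ℝ → ℝ

/-- Smoothness of a complex field of four real variables. -/
def Smooth4 (u : CField) : Prop :=
  ContDiff ℝ (⊤ : ℕ∞) (fun q : ℝ × ℝ × ℝ × ℝ => u q.1 q.2.1 q.2.2.1 q.2.2.2)

/-- Smoothness of a real field of four real variables. -/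
def RSmooth4 (u : RField) : Prop :=
  ContDiff ℝ (⊤ : ℕ∞) (fun q : ℝ × ℝ × ℝ × ℝ => u q.1 q.2.1 q.2.2.1 q.2.2.2)

/-- Compact support in `r_*` on each time slice. -/
def CompSupp (u : CField) : Prop :=
  ∀ t : ℝ, ∃ R : ℝ, ∀ x θ p : ℝ, R ≤ |x| → u t x θ p = 0

/-- Compact support in `r_*` on each time slice, real version. -/
def RCompSupp (u : RField) : Prop :=
  ∀ t : ℝ, ∃ R : ℝ, ∀ x θ p : ℝ, R ≤ |x| → u t x θ p = 0

/-- `∂_t`. -/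
def pd0 (u : CField) : CField := fun t x θ p => deriv (fun s => u s x θ p) t
/-- `∂_{r_*}`. -/
def pd1 (u : CField) : CField := fun t x θ p => deriv (fun s => u t s θ p) x
/-- `∂_θ`. -/
def pd2 (u : CField) : CField := fun t x θ p => deriv (fun s => u t x s p) θ
/-- `∂_ϕ`. -/
def pd3 (u : CField) : CField := fun t x θ p => deriv (fun s => u t x θ s) p

/-- `∂_μ` for `μ = 0,1,2,3`. -/
def pd (μ : Fin 4) (u : CField) : CField :=
  if μ = 0 then pd0 u else if μ = 1 then pd1 u else if μ = 2 then pd2 u else pd3 u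

def rpd0 (u : RField) : RField := fun t x θ p => deriv (fun s => u s x θ p) t
def rpd1 (u : RField) : RField := fun t x θ p => deriv (fun s => u t s θ p) x
def rpd2 (u : RField) : RField := fun t x θ p => deriv (fun s => u t x s p) θ
def rpd3 (u : RField) : RField := fun t x θ p => deriv (fun s => u t x θ s) p

def rpd (μ : Fin 4) (u : RField) : RField :=
  if μ = 0 then rpd0 u else if μ = 1 then rpd1 u else if μ = 2 then rpd2 u else rpd3 u

/-- Complex cast of a real field. -/
def cF (u : RField) : CField := fun t x θ p => (u t x θ p : ℂ)

/-- `L = ∂_t + ∂_{r_*}`. -/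
def Lop (u : CField) : CField := fun t x θ p => pd0 u t x θ p + pd1 u t x θ p
/-- `N = ∂_t − ∂_{r_*}`. -/
def Nop (u : CField) : CField := fun t x θ p => pd0 u t x θ p - pd1 u t x θ p
/-- `M = ∂_θ + (i/sin θ)∂_ϕ`. -/
def Mop (u : CField) : CField := fun t x θ p =>
  pd2 u t x θ p + (Complex.I / (Real.sin θ : ℂ)) * pd3 u t x θ p
/-- `M̄ = ∂_θ − (i/sin θ)∂_ϕ`. -/
def Mbar (u : CField) : CField := fun t x θ p =>
  pd2 u t x θ p - (Complex.I / (Real.sin θ : ℂ)) * pd3 u t x θ p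
/-- `M₁ = M + cot θ`. -/
def M1op (u : CField) : CField := fun t x θ p =>
  Mop u t x θ p + ((Real.cos θ / Real.sin θ : ℝ) : ℂ) * u t x θ p
/-- Spherical Laplacian `Δ_S = ∂²_θ + (1/sin²θ)∂²_ϕ + cot θ·∂_θ`. -/
def lapS (u : CField) : CField := fun t x θ p =>
  pd2 (pd2 u) t x θ p + ((1 / (Real.sin θ)^2 : ℝ) : ℂ) * pd3 (pd3 u) t x θ p
    + ((Real.cos θ / Real.sin θ : ℝ) : ℂ) * pd2 u t x θ p

/-- The Reissner–Nordström exterior data: mass `M`, charge `Q` with `Q² < M²`,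
and the inverse tortoise coordinate `r : ℝ → (r₊, ∞)` with `r' = f ∘ r`. -/
structure RNSetup where
  M : ℝ
  Q : ℝ
  hM : 0 < M
  hQ : Q ^ 2 < M ^ 2
  r : ℝ → ℝ
  r_smooth : ContDiff ℝ (⊤ : ℕ∞) r
  r_mono : StrictMono r
  r_range : ∀ s : ℝ, M + Real.sqrt (M ^ 2 - Q ^ 2) < r s
  r_surj : ∀ y : ℝ, M + Real.sqrt (M ^ 2 - Q ^ 2) < y → ∃ s : ℝ, r s = y
  r_deriv : ∀ s : ℝ, deriv r s = 1 - 2 * M / r s + Q ^ 2 / (r s) ^ 2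

/-- `f(x) = 1 − 2M/x + Q²/x²`. -/
def RNSetup.f (S : RNSetup) (x : ℝ) : ℝ := 1 - 2 * S.M / x + S.Q ^ 2 / x ^ 2

/-- `V(r_*) = f(r(r_*))/r(r_*)²`. -/
def RNSetup.V (S : RNSetup) (s : ℝ) : ℝ := S.f (S.r s) / (S.r s) ^ 2

/-- Covariant derivative `D_μ φ = ∂_μ φ − i A_μ φ`. -/
def Dc (A : Fin 4 → RField) (μ : Fin 4) (φ : CField) : CField := fun t x θ p =>
  pd μ φ t x θ p - Complex.I * (A μ t x θ p : ℂ) * φ t x θ p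

/-- The current-type bilinear expression `D_μφ·φ̄ − φ·conj(D_μφ)`. -/
def cur (A : Fin 4 → RField) (φ : CField) (μ : Fin 4) : CField := fun t x θ p =>
  Dc A μ φ t x θ p * (starRingEnd ℂ) (φ t x θ p)
    - φ t x θ p * (starRingEnd ℂ) (Dc A μ φ t x θ p)

def srcTerm2 (S : RNSetup) (A : Fin 4 → RField) (φ : CField) : CField := fun t x θ p =>
  Complex.I * (S.f (S.r x) : ℂ) * cur A φ 2 t x θ p

def srcTerm3 (S : RNSetup) (A : Fin 4 → RField) (φ : CField) : CField := fun t x θ p =>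
  Complex.I * ((S.f (S.r x) / Real.sin θ : ℝ) : ℂ) * cur A φ 3 t x θ p

def srcTerm01 (S : RNSetup) (A : Fin 4 → RField) (φ : CField) : CField := fun t x θ p =>
  Complex.I * (((S.r x) ^ 2 : ℝ) : ℂ) * (cur A φ 0 t x θ p + cur A φ 1 t x θ p)

/-- The source term `ρ(φ, φ̄)`. -/
def src (S : RNSetup) (A : Fin 4 → RField) (φ : CField) : CField := fun t x θ p =>
  - M1op (srcTerm2 S A φ) t x θ p - M1op (srcTerm3 S A φ) t x θ p
    + Lop (srcTerm01 S A φ) t x θ p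

/-- The wave-like operator `□̃u = ∂²_t u − ∂²_{r_*} u + V·Δ_S u`. -/
def waveOp (S : RNSetup) (u : CField) : CField := fun t x θ p =>
  pd0 (pd0 u) t x θ p - pd1 (pd1 u) t x θ p + (S.V x : ℂ) * lapS u t x θ p

/-- Diagonal inverse metric components `g^{μμ}` (evaluated at `r = r(r_*)`). -/
def ginv (S : RNSetup) (μ : Fin 4) (x θ : ℝ) : ℝ :=
  if μ = 0 then 1 / S.f (S.r x)
  else if μ = 1 then -(S.f (S.r x))
  else if μ = 2 then -(1 / (S.r x) ^ 2)
  else -(1 / ((S.r x) ^ 2 * (Real.sin θ) ^ 2))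

/-- Volume factor `√|g| = r² sin θ`. -/
def vol (S : RNSetup) (x θ : ℝ) : ℝ := (S.r x) ^ 2 * Real.sin θ

/-- CField strength `F_{μν} = ∂_μ A_ν − ∂_ν A_μ`. -/
def Fst (A : Fin 4 → RField) (μ ν : Fin 4) : RField := fun t x θ p =>
  rpd μ (A ν) t x θ p - rpd ν (A μ) t x θ p

/-- `F^{μν} = g^{μμ} g^{νν} F_{μν}` (diagonal metric). -/
def Fup (S : RNSetup) (A : Fin 4 → RField) (μ ν : Fin 4) : RField := fun t x θ p =>
  ginv S μ x θ * ginv S ν x θ * Fst A μ ν t x θ p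

/-- Maxwell equations `(1/√|g|)·∂_α(√|g|·F^{αβ}) = −i·g^{βγ}(D_γφ·φ̄ − φ·conj(D_γφ))`. -/
def MaxwellEq (S : RNSetup) (A : Fin 4 → RField) (φ : CField) : Prop :=
  ∀ (β : Fin 4) (t x θ p : ℝ), θ ∈ Set.Ioo 0 π → p ∈ Set.Ioo 0 (2 * π) →
    ((((1 / vol S x θ) *
        ∑ α : Fin 4, rpd α (fun t' x' θ' p' => vol S x' θ' * Fup S A α β t' x' θ' p') t x θ p : ℝ)) : ℂ)
      = - Complex.I * ((ginv S β x θ : ℝ) : ℂ) * cur A φ β t x θ p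

/-- Higgs equation `(1/√|g|)·(∂_α − iA_α)(√|g|·g^{αβ}(∂_β − iA_β)φ) = 0`. -/
def HiggsEq (S : RNSetup) (A : Fin 4 → RField) (φ : CField) : Prop :=
  ∀ (t x θ p : ℝ), θ ∈ Set.Ioo 0 π → p ∈ Set.Ioo 0 (2 * π) →
    ((1 / vol S x θ : ℝ) : ℂ) *
      (∑ α : Fin 4,
        (pd α (fun t' x' θ' p' =>
            ((vol S x' θ' * ginv S α x' θ' : ℝ) : ℂ) * Dc A α φ t' x' θ' p') t x θ p
          - Complex.I * ((A α t x θ p : ℝ) : ℂ) *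
              (((vol S x θ * ginv S α x θ : ℝ) : ℂ) * Dc A α φ t x θ p))) = 0

/-- The Maxwell–Higgs system together with smoothness of the fields. -/
def IsMHSolution (S : RNSetup) (A : Fin 4 → RField) (φ : CField) : Prop :=
  (∀ μ, RSmooth4 (A μ)) ∧ Smooth4 φ ∧ MaxwellEq S A φ ∧ HiggsEq S A φ

/-- Energy density `e`. -/
def eDen (S : RNSetup) (A : Fin 4 → RField) (φ u : CField) : RField := fun t x θ p =>
  ‖pd0 u t x θ p‖ ^ 2 + ‖pd1 u t x θ p‖ ^ 2
    + S.V x * (‖pd2 u t x θ p‖ ^ 2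
        + (1 / (Real.sin θ) ^ 2) * ‖pd3 u t x θ p‖ ^ 2)
    + ‖Dc A 0 φ t x θ p‖ ^ 2 + ‖Dc A 1 φ t x θ p‖ ^ 2
    + ‖Dc A 2 φ t x θ p‖ ^ 2 + ‖Dc A 3 φ t x θ p‖ ^ 2

/-- Conformal energy density `e_C`. -/
def eConf (S : RNSetup) (A : Fin 4 → RField) (φ u : CField) : RField := fun t x θ p =>
  (1 / 2) * (t ^ 2 + x ^ 2) * eDen S A φ u t x θ p
    + 2 * t * x * (pd0 u t x θ p * (starRingEnd ℂ) (pd1 u t x θ p)).re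
    + eDen S A φ u t x θ p

/-- Integral of a density over the slice `Σ_t` with the measure `sin θ dϕ dθ dr_*`. -/
def sliceIntegral (w : RField) (t : ℝ) : ℝ :=
  ∫ x : ℝ, ∫ θ in (0:ℝ)..π, ∫ p in (0:ℝ)..(2 * π), w t x θ p * Real.sin θ

/-- The energy `E[u, φ](t)`. -/
def energyE (S : RNSetup) (A : Fin 4 → RField) (φ u : CField) (t : ℝ) : ℝ :=
  (1 / 2) * sliceIntegral (eDen S A φ u) t

/-- The conformal energy `E_C[u, φ](t)`. -/
def energyC (S : RNSetup) (A : Fin 4 → RField) (φ u : CField) (t : ℝ) : ℝ :=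
  (1 / 2) * sliceIntegral (eConf S A φ u) t

/-- The local energy `E_l[u, φ](t)`, over `|r_*| ≤ 3t/4`. -/
def energyL (S : RNSetup) (A : Fin 4 → RField) (φ u : CField) (t : ℝ) : ℝ :=
  (1 / 2) * ∫ x in {y : ℝ | |y| ≤ 3 * t / 4},
    ∫ θ in (0:ℝ)..π, ∫ p in (0:ℝ)..(2 * π), eDen S A φ u t x θ p * Real.sin θ

/-- Spacetime integral over `[t₁,t₂] × ℝ × (0,π) × (0,2π)` with weight `sin θ`. -/
def stIntegral (w : RField) (t₁ t₂ : ℝ) : ℝ :=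
  ∫ t in t₁..t₂, sliceIntegral w t

/-- Density of the field energy `𝓔`. -/
def fieldEDen (A : Fin 4 → RField) (φ : CField) : RField := fun t x θ p =>
  (∑ μ : Fin 4, ∑ ν : Fin 4, if μ < ν then (Fst A μ ν t x θ p) ^ 2 else 0)
    + ∑ μ : Fin 4, ‖Dc A μ φ t x θ p‖ ^ 2

/-- The field energy `𝓔(t)`. -/
def fieldEnergy (A : Fin 4 → RField) (φ : CField) (t : ℝ) : ℝ :=
  (1 / 2) * sliceIntegral (fieldEDen A φ) t

/-- The local region `Ω_loc` attached to `[t₁, t₂]`. -/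
def locRegion (t₁ t₂ : ℝ) : Set (ℝ × ℝ × ℝ × ℝ) :=
  {q | t₁ ≤ q.1 ∧ q.1 ≤ t₂ ∧ q.1 / 2 ≤ |q.2.1| ∧ |q.2.1| ≤ 3 * q.1 / 4 ∧
       q.2.2.1 ∈ Set.Ioo 0 π ∧ q.2.2.2 ∈ Set.Ioo 0 (2 * π)}

/-- Local `L²` norm `‖g‖_{L²_loc}` over `Ω_loc` with measure `sin θ dϕ dθ dr_* dt`. -/
def L2loc (g : CField) (t₁ t₂ : ℝ) : ℝ :=
  (∫ q in locRegion t₁ t₂,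
      ‖g q.1 q.2.1 q.2.2.1 q.2.2.2‖ ^ 2 * Real.sin q.2.2.1) ^ ((1:ℝ)/2)

/-- Local `L^∞` norm `‖g‖_{L^∞_loc}` over `Ω_loc`. -/
def LinfLoc (g : CField) (t₁ t₂ : ℝ) : ℝ :=
  sSup ((fun q : ℝ × ℝ × ℝ × ℝ => ‖g q.1 q.2.1 q.2.2.1 q.2.2.2‖) '' locRegion t₁ t₂)

/-- `‖A‖_{L^∞_loc}`, summed over the components of the gauge potential. -/
def LinfLocA (A : Fin 4 → RField) (t₁ t₂ : ℝ) : ℝ := ∑ μ : Fin 4, LinfLoc (cF (A μ)) t₁ t₂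

/-- `‖A‖_{L²_loc}`, summed over the components of the gauge potential. -/
def L2locA (A : Fin 4 → RField) (t₁ t₂ : ℝ) : ℝ := ∑ μ : Fin 4, L2loc (cF (A μ)) t₁ t₂

/-- `‖∇g‖_{L²_loc}`: sum of the local `L²` norms of all first partials. -/
def L2locGrad1 (g : CField) (t₁ t₂ : ℝ) : ℝ := ∑ μ : Fin 4, L2loc (pd μ g) t₁ t₂

/-- `‖∇∇g‖_{L²_loc}`. -/
def L2locGrad2 (g : CField) (t₁ t₂ : ℝ) : ℝ :=
  ∑ μ : Fin 4, ∑ ν : Fin 4, L2loc (pd μ (pd ν g)) t₁ t₂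

/-- `‖∇∇∇g‖_{L²_loc}`. -/
def L2locGrad3 (g : CField) (t₁ t₂ : ℝ) : ℝ :=
  ∑ μ : Fin 4, ∑ ν : Fin 4, ∑ κ : Fin 4, L2loc (pd μ (pd ν (pd κ g))) t₁ t₂

/-- `‖∇∇∇∇g‖_{L²_loc}`. -/
def L2locGrad4 (g : CField) (t₁ t₂ : ℝ) : ℝ :=
  ∑ μ : Fin 4, ∑ ν : Fin 4, ∑ κ : Fin 4, ∑ ι : Fin 4, L2loc (pd μ (pd ν (pd κ (pd ι g)))) t₁ t₂

def L2locGrad1A (A : Fin 4 → RField) (t₁ t₂ : ℝ) : ℝ := ∑ ι : Fin 4, L2locGrad1 (cF (A ι)) t₁ t₂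
def L2locGrad2A (A : Fin 4 → RField) (t₁ t₂ : ℝ) : ℝ := ∑ ι : Fin 4, L2locGrad2 (cF (A ι)) t₁ t₂
def L2locGrad3A (A : Fin 4 → RField) (t₁ t₂ : ℝ) : ℝ := ∑ ι : Fin 4, L2locGrad3 (cF (A ι)) t₁ t₂
def L2locGrad4A (A : Fin 4 → RField) (t₁ t₂ : ℝ) : ℝ := ∑ ι : Fin 4, L2locGrad4 (cF (A ι)) t₁ t₂

/-- Morawetz bulk density `Q(φ, φ̄) = Re[((t²+r_*²)∂_t u + 2tr_*∂_{r_*}u)·conj ρ]`. -/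
def Qden (S : RNSetup) (A : Fin 4 → RField) (φ u : CField) : RField := fun t x θ p =>
  ((((t ^ 2 + x ^ 2 : ℝ) : ℂ) * pd0 u t x θ p + ((2 * t * x : ℝ) : ℂ) * pd1 u t x θ p)
      * (starRingEnd ℂ) (src S A φ t x θ p)).re

/-- `𝓘(r_*) = 1 + r_*(f'(r)/2 − f(r)/r)` at `r = r(r_*)`. -/
def Ical (S : RNSetup) (x : ℝ) : ℝ :=
  1 + x * (deriv S.f (S.r x) / 2 - S.f (S.r x) / S.r x)

/-- Angular gradient density `|∂_θ u|² + (1/sin²θ)|∂_ϕ u|²`. -/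
def angDen (u : CField) : RField := fun t x θ p =>
  ‖pd2 u t x θ p‖ ^ 2 + (1 / (Real.sin θ) ^ 2) * ‖pd3 u t x θ p‖ ^ 2

/-- `∂_t` of a function of `(t, r_*)`. -/
def dT (g : ℝ → ℝ → ℝ) : ℝ → ℝ → ℝ := fun t x => deriv (fun s => g s x) t
/-- `∂_{r_*}` of a function of `(t, r_*)`. -/
def dX (g : ℝ → ℝ → ℝ) : ℝ → ℝ → ℝ := fun t x => deriv (fun s => g t s) x

/-- Real spherical Laplacian. -/
def rlapS (u : RField) : RField := fun t x θ p =>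
  rpd2 (rpd2 u) t x θ p + (1 / (Real.sin θ) ^ 2) * rpd3 (rpd3 u) t x θ p
    + (Real.cos θ / Real.sin θ) * rpd2 u t x θ p

/-- Real wave-like operator. -/
def rwaveOp (S : RNSetup) (u : RField) : RField := fun t x θ p =>
  rpd0 (rpd0 u) t x θ p - rpd1 (rpd1 u) t x θ p + S.V x * rlapS u t x θ p

/-- The radial multiplier profile `h(s) = ∫₀^s (1 + (εy)²)^{−σ} dy`. -/
def hprof (σ ε : ℝ) (s : ℝ) : ℝ := ∫ y in (0:ℝ)..s, (1 + (ε * y) ^ 2) ^ (-σ)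

section Helpers

-- helpers
abbrev P4 : Type := ℝ × ℝ × ℝ × ℝ
def cu (u : CField) : P4 → ℂ := fun q => u q.1 q.2.1 q.2.2.1 q.2.2.2

lemma smooth4_iff {u : CField} : Smooth4 u ↔ ContDiff ℝ (⊤ : ℕ∞) (cu u) := Iff.rfl

lemma line0 (t x θ p : ℝ) : HasDerivAt (fun s : ℝ => ((s, x, θ, p) : P4)) (1, 0, 0, 0) t :=
  (hasDerivAt_id t).prodMk (hasDerivAt_const t ((x, θ, p) : ℝ × ℝ × ℝ))
lemma line1 (t x θ p : ℝ) : HasDerivAt (fun s : ℝ => ((t, s, θ, p) : P4)) (0, 1, 0, 0) x :=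
  (hasDerivAt_const x t).prodMk ((hasDerivAt_id x).prodMk (hasDerivAt_const x ((θ, p) : ℝ × ℝ)))
lemma line2 (t x θ p : ℝ) : HasDerivAt (fun s : ℝ => ((t, x, s, p) : P4)) (0, 0, 1, 0) θ :=
  (hasDerivAt_const θ t).prodMk ((hasDerivAt_const θ x).prodMk ((hasDerivAt_id θ).prodMk (hasDerivAt_const θ p)))
lemma line3 (t x θ p : ℝ) : HasDerivAt (fun s : ℝ => ((t, x, θ, s) : P4)) (0, 0, 0, 1) p :=
  (hasDerivAt_const p t).prodMk ((hasDerivAt_const p x).prodMk ((hasDerivAt_const p θ).prodMk (hasDerivAt_id p)))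

variable {w : CField} {W : P4 →L[ℝ] ℂ} {t x θ p : ℝ}

lemma hasDerivAt_s0 (h : HasFDerivAt (cu w) W (t, x, θ, p)) :
    HasDerivAt (fun s => w s x θ p) (W (1, 0, 0, 0)) t :=
  HasFDerivAt.comp_hasDerivAt (f := fun s : ℝ => ((s, x, θ, p) : P4)) t h (line0 t x θ p)
lemma hasDerivAt_s1 (h : HasFDerivAt (cu w) W (t, x, θ, p)) :
    HasDerivAt (fun s => w t s θ p) (W (0, 1, 0, 0)) x :=
  HasFDerivAt.comp_hasDerivAt (f := fun s : ℝ => ((t, s, θ, p) : P4)) x h (line1 t x θ p)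
lemma hasDerivAt_s2 (h : HasFDerivAt (cu w) W (t, x, θ, p)) :
    HasDerivAt (fun s => w t x s p) (W (0, 0, 1, 0)) θ :=
  HasFDerivAt.comp_hasDerivAt (f := fun s : ℝ => ((t, x, s, p) : P4)) θ h (line2 t x θ p)
lemma hasDerivAt_s3 (h : HasFDerivAt (cu w) W (t, x, θ, p)) :
    HasDerivAt (fun s => w t x θ s) (W (0, 0, 0, 1)) p :=
  HasFDerivAt.comp_hasDerivAt (f := fun s : ℝ => ((t, x, θ, s) : P4)) p h (line3 t x θ p)


lemma Smooth4.diffAt (h : Smooth4 w) (q : P4) : DifferentiableAt ℝ (cu w) q :=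
  ((smooth4_iff.mp h).differentiable (by simp)).differentiableAt

lemma Smooth4.d0 (h : Smooth4 w) (t x θ p : ℝ) : DifferentiableAt ℝ (fun s => w s x θ p) t :=
  (hasDerivAt_s0 (h.diffAt _).hasFDerivAt).differentiableAt
lemma Smooth4.d1 (h : Smooth4 w) (t x θ p : ℝ) : DifferentiableAt ℝ (fun s => w t s θ p) x :=
  (hasDerivAt_s1 (h.diffAt _).hasFDerivAt).differentiableAt
lemma Smooth4.d2 (h : Smooth4 w) (t x θ p : ℝ) : DifferentiableAt ℝ (fun s => w t x s p) θ :=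
  (hasDerivAt_s2 (h.diffAt _).hasFDerivAt).differentiableAt
lemma Smooth4.d3 (h : Smooth4 w) (t x θ p : ℝ) : DifferentiableAt ℝ (fun s => w t x θ s) p :=
  (hasDerivAt_s3 (h.diffAt _).hasFDerivAt).differentiableAt

def dir4 : Fin 4 → P4 := ![(1,0,0,0), (0,1,0,0), (0,0,1,0), (0,0,0,1)]

lemma pd_eq (i : Fin 4) (h : HasFDerivAt (cu w) W (t, x, θ, p)) :
    pd i w t x θ p = W (dir4 i) := by
  fin_cases i
  · exact (hasDerivAt_s0 h).deriv
  · exact (hasDerivAt_s1 h).deriv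
  · exact (hasDerivAt_s2 h).deriv
  · exact (hasDerivAt_s3 h).deriv

lemma cu_pd (h : Smooth4 w) (i : Fin 4) :
    cu (pd i w) = fun q : P4 => fderiv ℝ (cu w) q (dir4 i) := by
  funext q
  obtain ⟨t, x, θ, p⟩ := q
  exact pd_eq i (h.diffAt (t, x, θ, p)).hasFDerivAt

lemma Smooth4.pd (h : Smooth4 w) (i : Fin 4) : Smooth4 (pd i w) := by
  rw [smooth4_iff, show cu (_root_.pd i w) = _ from cu_pd h i]
  exact ((smooth4_iff.mp h).fderiv_right (by exact_mod_cast le_top)).clm_apply contDiff_const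

lemma pd_comm (h : Smooth4 w) (i j : Fin 4) (t x θ p : ℝ) :
    pd i (pd j w) t x θ p = pd j (pd i w) t x θ p := by
  have hC : ContDiff ℝ (⊤ : ℕ∞) (cu w) := smooth4_iff.mp h
  have hd1 : ContDiff ℝ (⊤ : ℕ∞) (fderiv ℝ (cu w)) := hC.fderiv_right (by norm_cast)
  have hf2 : HasFDerivAt (fderiv ℝ (cu w)) (fderiv ℝ (fderiv ℝ (cu w)) (t, x, θ, p)) (t, x, θ, p) :=
    ((hd1.differentiable (by simp)) (t, x, θ, p)).hasFDerivAt
  have key : ∀ v u : P4,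
      fderiv ℝ (fun y => fderiv ℝ (cu w) y v) (t, x, θ, p) u
        = fderiv ℝ (fderiv ℝ (cu w)) (t, x, θ, p) u v := by
    intro v u
    have h2 : HasFDerivAt (fun y => fderiv ℝ (cu w) y v)
        ((ContinuousLinearMap.apply ℝ ℂ v).comp (fderiv ℝ (fderiv ℝ (cu w)) (t, x, θ, p)))
        (t, x, θ, p) :=
      (ContinuousLinearMap.apply ℝ ℂ v).hasFDerivAt.comp (t, x, θ, p) hf2
    rw [h2.fderiv]; rfl
  have hsym : IsSymmSndFDerivAt ℝ (cu w) (t, x, θ, p) :=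
    hC.contDiffAt.isSymmSndFDerivAt (by rw [minSmoothness_of_isRCLikeNormedField]; exact WithTop.coe_le_coe.mpr le_top)
  have e1 : pd i (pd j w) t x θ p
      = fderiv ℝ (fun y => fderiv ℝ (cu w) y (dir4 j)) (t, x, θ, p) (dir4 i) := by
    have := pd_eq i ((h.pd j).diffAt (t, x, θ, p)).hasFDerivAt
    rwa [cu_pd h j] at this
  have e2 : pd j (pd i w) t x θ p
      = fderiv ℝ (fun y => fderiv ℝ (cu w) y (dir4 i)) (t, x, θ, p) (dir4 j) := by
    have := pd_eq j ((h.pd i).diffAt (t, x, θ, p)).hasFDerivAt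
    rwa [cu_pd h i] at this
  rw [e1, e2, key, key]
  exact hsym _ _

lemma pd_z (u : CField) : pd 0 u = pd0 u := rfl
lemma pd_o (u : CField) : pd 1 u = pd1 u := rfl
lemma pd_t (u : CField) : pd 2 u = pd2 u := rfl
lemma pd_r (u : CField) : pd 3 u = pd3 u := rfl

lemma comm01 (h : Smooth4 w) (t x θ p : ℝ) : pd0 (pd1 w) t x θ p = pd1 (pd0 w) t x θ p := by
  have := pd_comm h 0 1 t x θ p; rwa [pd_z, pd_o, pd_z, pd_o] at this
lemma comm02 (h : Smooth4 w) (t x θ p : ℝ) : pd0 (pd2 w) t x θ p = pd2 (pd0 w) t x θ p := by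
  have := pd_comm h 0 2 t x θ p; rwa [pd_z, pd_t, pd_z, pd_t] at this
lemma comm03 (h : Smooth4 w) (t x θ p : ℝ) : pd0 (pd3 w) t x θ p = pd3 (pd0 w) t x θ p := by
  have := pd_comm h 0 3 t x θ p; rwa [pd_z, pd_r, pd_z, pd_r] at this
lemma comm12 (h : Smooth4 w) (t x θ p : ℝ) : pd1 (pd2 w) t x θ p = pd2 (pd1 w) t x θ p := by
  have := pd_comm h 1 2 t x θ p; rwa [pd_o, pd_t, pd_o, pd_t] at this
lemma comm13 (h : Smooth4 w) (t x θ p : ℝ) : pd1 (pd3 w) t x θ p = pd3 (pd1 w) t x θ p := by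
  have := pd_comm h 1 3 t x θ p; rwa [pd_o, pd_r, pd_o, pd_r] at this
lemma comm23 (h : Smooth4 w) (t x θ p : ℝ) : pd2 (pd3 w) t x θ p = pd3 (pd2 w) t x θ p := by
  have := pd_comm h 2 3 t x θ p; rwa [pd_t, pd_r, pd_t, pd_r] at this


end Helpers

section Composite

variable {S : RNSetup} {A : Fin 4 → RField} {φ : CField} {t x θ p : ℝ}

lemma diffAt_d2 {w : CField} (h : DifferentiableAt ℝ (cu w) (t, x, θ, p)) :
    DifferentiableAt ℝ (fun s => w t x s p) θ :=
  (hasDerivAt_s2 h.hasFDerivAt).differentiableAt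

lemma diffAt_d3 {w : CField} (h : DifferentiableAt ℝ (cu w) (t, x, θ, p)) :
    DifferentiableAt ℝ (fun s => w t x θ s) p :=
  (hasDerivAt_s3 h.hasFDerivAt).differentiableAt

lemma RNSetup.r_ne (S : RNSetup) (s : ℝ) : S.r s ≠ 0 := by
  have h := S.r_range s
  have h2 := Real.sqrt_nonneg (S.M ^ 2 - S.Q ^ 2)
  have h3 := S.hM
  intro h0; rw [h0] at h; linarith

lemma smooth_fr (S : RNSetup) : ContDiff ℝ (⊤ : ℕ∞) (fun x : ℝ => S.f (S.r x)) := by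
  unfold RNSetup.f
  exact (contDiff_const.sub (contDiff_const.div S.r_smooth fun s => S.r_ne s)).add
    (contDiff_const.div (S.r_smooth.pow 2) fun s => pow_ne_zero 2 (S.r_ne s))

lemma smooth_cast {g : RField} (h : RSmooth4 g) :
    ContDiff ℝ (⊤ : ℕ∞) (fun q : P4 => ((g q.1 q.2.1 q.2.2.1 q.2.2.2 : ℝ) : ℂ)) :=
  Complex.ofRealCLM.contDiff.comp h

lemma smooth_conj {u : CField} (h : Smooth4 u) :
    ContDiff ℝ (⊤ : ℕ∞) (fun q : P4 => (starRingEnd ℂ) (cu u q)) := by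
  have := ((Complex.conjCLE : ℂ ≃L[ℝ] ℂ) : ℂ →L[ℝ] ℂ).contDiff.comp (smooth4_iff.mp h)
  exact this

lemma smooth_Dc (hφ : Smooth4 φ) (hA : ∀ μ, RSmooth4 (A μ)) (μ : Fin 4) :
    Smooth4 (Dc A μ φ) :=
  (smooth4_iff.mp (hφ.pd μ)).sub
    ((contDiff_const.mul (smooth_cast (hA μ))).mul (smooth4_iff.mp hφ))

lemma smooth_cur (hφ : Smooth4 φ) (hA : ∀ μ, RSmooth4 (A μ)) (μ : Fin 4) :
    Smooth4 (cur A φ μ) :=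
  ((smooth4_iff.mp (smooth_Dc hφ hA μ)).mul (smooth_conj hφ)).sub
    ((smooth4_iff.mp hφ).mul (smooth_conj (smooth_Dc hφ hA μ)))

lemma smooth_srcTerm01 (hφ : Smooth4 φ) (hA : ∀ μ, RSmooth4 (A μ)) :
    Smooth4 (srcTerm01 S A φ) :=
  (contDiff_const.mul (Complex.ofRealCLM.contDiff.comp
      ((S.r_smooth.pow 2).comp (contDiff_fst.comp contDiff_snd)))).mul
    ((smooth4_iff.mp (smooth_cur hφ hA 0)).add (smooth4_iff.mp (smooth_cur hφ hA 1)))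

lemma smooth_srcTerm2 (hφ : Smooth4 φ) (hA : ∀ μ, RSmooth4 (A μ)) :
    Smooth4 (srcTerm2 S A φ) :=
  (contDiff_const.mul (Complex.ofRealCLM.contDiff.comp
      ((smooth_fr S).comp (contDiff_fst.comp contDiff_snd)))).mul
    (smooth4_iff.mp (smooth_cur hφ hA 2))

lemma diff_srcTerm3 (hφ : Smooth4 φ) (hA : ∀ μ, RSmooth4 (A μ)) (sθ : Real.sin θ ≠ 0) :
    DifferentiableAt ℝ (cu (srcTerm3 S A φ)) (t, x, θ, p) := by
  have hfr : DifferentiableAt ℝ (fun q : P4 => S.f (S.r q.2.1)) (t, x, θ, p) :=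
    (((smooth_fr S).comp (contDiff_fst.comp contDiff_snd)).differentiable
      (by simp)).differentiableAt
  have hsin : DifferentiableAt ℝ (fun q : P4 => Real.sin q.2.2.1) (t, x, θ, p) :=
    (Real.differentiable_sin.comp
      (differentiable_fst.comp (differentiable_snd.comp differentiable_snd))).differentiableAt
  have hquot : DifferentiableAt ℝ (fun q : P4 => S.f (S.r q.2.1) / Real.sin q.2.2.1)
      (t, x, θ, p) := by
    simp only [div_eq_mul_inv]
    exact hfr.mul (hsin.inv (by exact sθ))
  have hcast : DifferentiableAt ℝ
      (fun q : P4 => ((S.f (S.r q.2.1) / Real.sin q.2.2.1 : ℝ) : ℂ)) (t, x, θ, p) :=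
    Complex.ofRealCLM.differentiableAt.comp _ hquot
  exact ((differentiableAt_const Complex.I).mul hcast).mul
    ((smooth_cur hφ hA 3).diffAt (t, x, θ, p))

end Composite


lemma smooth_pd2 {u : CField} (hu : Smooth4 u) : Smooth4 (pd2 u) := pd_t u ▸ hu.pd 2
lemma smooth_pd3 {u : CField} (hu : Smooth4 u) : Smooth4 (pd3 u) := pd_r u ▸ hu.pd 3

lemma M1Mbar {u : CField} (hu : Smooth4 u) {t x θ p : ℝ} (sθ : Real.sin θ ≠ 0) :
    M1op (Mbar u) t x θ p = lapS u t x θ p := by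
  have sθC : ((Real.sin θ : ℝ) : ℂ) ≠ 0 := Complex.ofReal_ne_zero.mpr sθ
  have s2 : Smooth4 (pd2 u) := smooth_pd2 hu
  have s3 : Smooth4 (pd3 u) := smooth_pd3 hu
  have hsC : HasDerivAt (fun s : ℝ => ((Real.sin s : ℝ) : ℂ)) ((Real.cos θ : ℝ) : ℂ) θ :=
    (Real.hasDerivAt_sin θ).ofReal_comp
  have hc : HasDerivAt (fun s : ℝ => Complex.I / (Real.sin s : ℂ))
      ((0 * (Real.sin θ : ℂ) - Complex.I * (Real.cos θ : ℂ)) / (Real.sin θ : ℂ) ^ 2) θ :=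
    (hasDerivAt_const θ Complex.I).div hsC sθC
  have h3 : HasDerivAt (fun s => pd3 u t x s p) (pd2 (pd3 u) t x θ p) θ :=
    (s3.d2 t x θ p).hasDerivAt
  have h2 : HasDerivAt (fun s => pd2 u t x s p) (pd2 (pd2 u) t x θ p) θ :=
    (s2.d2 t x θ p).hasDerivAt
  have hm := hc.mul h3
  have e2 : pd2 (Mbar u) t x θ p = pd2 (pd2 u) t x θ p
      - ((0 * (Real.sin θ : ℂ) - Complex.I * (Real.cos θ : ℂ)) / (Real.sin θ : ℂ) ^ 2
            * pd3 u t x θ p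
        + Complex.I / (Real.sin θ : ℂ) * pd2 (pd3 u) t x θ p) := (h2.sub hm).deriv
  have hA : HasDerivAt (fun s => pd2 u t x θ s) (pd3 (pd2 u) t x θ p) p :=
    (s2.d3 t x θ p).hasDerivAt
  have hB : HasDerivAt (fun s => Complex.I / (Real.sin θ : ℂ) * pd3 u t x θ s)
      (Complex.I / (Real.sin θ : ℂ) * pd3 (pd3 u) t x θ p) p :=
    ((s3.d3 t x θ p).hasDerivAt).const_mul _
  have e3 : pd3 (Mbar u) t x θ p = pd3 (pd2 u) t x θ p
      - Complex.I / (Real.sin θ : ℂ) * pd3 (pd3 u) t x θ p := (hA.sub hB).deriv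
  have e0 : Mbar u t x θ p
      = pd2 u t x θ p - Complex.I / (Real.sin θ : ℂ) * pd3 u t x θ p := rfl
  show pd2 (Mbar u) t x θ p + Complex.I / (Real.sin θ : ℂ) * pd3 (Mbar u) t x θ p
      + ((Real.cos θ / Real.sin θ : ℝ) : ℂ) * Mbar u t x θ p
      = pd2 (pd2 u) t x θ p + ((1 / Real.sin θ ^ 2 : ℝ) : ℂ) * pd3 (pd3 u) t x θ p
        + ((Real.cos θ / Real.sin θ : ℝ) : ℂ) * pd2 u t x θ p
  rw [e2, e3, e0, comm23 hu]
  push_cast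
  have sθC' : Complex.sin (θ : ℂ) ≠ 0 := by exact_mod_cast sθC
  field_simp
  ring_nf
  simp only [Complex.I_sq]
  ring


/-- the compacted Maxwell–Higgs system implies the wave-like equation
`□̃Φ₀ = ρ(φ, φ̄)` for the middle spin component. -/
theorem middle_component_wave_equation
    (S : RNSetup) (Φ₁ Φ₀ Φm1 φ : CField) (A : Fin 4 → RField)
    (hΦ₁ : Smooth4 Φ₁) (hΦ₀ : Smooth4 Φ₀) (hΦm1 : Smooth4 Φm1) (hφ : Smooth4 φ)
    (hA : ∀ μ, RSmooth4 (A μ))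
    (heq1 : ∀ t x θ p : ℝ, θ ∈ Set.Ioo 0 π → p ∈ Set.Ioo 0 (2 * π) →
      Nop Φ₁ t x θ p = (S.V x : ℂ) * Mop Φ₀ t x θ p
        + Complex.I * (S.f (S.r x) : ℂ) * cur A φ 2 t x θ p
        + Complex.I * ((S.f (S.r x) / Real.sin θ : ℝ) : ℂ) * cur A φ 3 t x θ p)
    (heq2 : ∀ t x θ p : ℝ, θ ∈ Set.Ioo 0 π → p ∈ Set.Ioo 0 (2 * π) →
      Lop Φ₀ t x θ p = Mbar Φ₁ t x θ p
        + Complex.I * (((S.r x) ^ 2 : ℝ) : ℂ) * cur A φ 0 t x θ p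
        + Complex.I * (((S.r x) ^ 2 : ℝ) : ℂ) * cur A φ 1 t x θ p)
    (heq3 : ∀ t x θ p : ℝ, θ ∈ Set.Ioo 0 π → p ∈ Set.Ioo 0 (2 * π) →
      Nop Φ₀ t x θ p = - M1op Φm1 t x θ p
        + Complex.I * (((S.r x) ^ 2 : ℝ) : ℂ) * cur A φ 0 t x θ p
        + Complex.I * (((S.r x) ^ 2 : ℝ) : ℂ) * cur A φ 1 t x θ p)
    (heq4 : ∀ t x θ p : ℝ, θ ∈ Set.Ioo 0 π → p ∈ Set.Ioo 0 (2 * π) →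
      Lop Φm1 t x θ p = (S.V x : ℂ) * Mbar Φ₀ t x θ p
        + Complex.I * (S.f (S.r x) : ℂ) * cur A φ 2 t x θ p
        + Complex.I * ((S.f (S.r x) / Real.sin θ : ℝ) : ℂ) * cur A φ 3 t x θ p) :
    ∀ t x θ p : ℝ, θ ∈ Set.Ioo 0 π → p ∈ Set.Ioo 0 (2 * π) →
      waveOp S Φ₀ t x θ p = src S A φ t x θ p := by
  intro t x θ p hθ hp
  have sθ : Real.sin θ ≠ 0 := ne_of_gt (Real.sin_pos_of_pos_of_lt_pi hθ.1 hθ.2)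
  have sθC : ((Real.sin θ : ℝ) : ℂ) ≠ 0 := Complex.ofReal_ne_zero.mpr sθ
  have sΦ₀0 : Smooth4 (pd0 Φ₀) := pd_z Φ₀ ▸ hΦ₀.pd 0
  have sΦ₀1 : Smooth4 (pd1 Φ₀) := pd_o Φ₀ ▸ hΦ₀.pd 1
  have sΦ₀2 : Smooth4 (pd2 Φ₀) := pd_t Φ₀ ▸ hΦ₀.pd 2
  have sΦ₀3 : Smooth4 (pd3 Φ₀) := pd_r Φ₀ ▸ hΦ₀.pd 3
  have sm0 : Smooth4 (pd0 Φm1) := pd_z Φm1 ▸ hΦm1.pd 0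
  have sm1 : Smooth4 (pd1 Φm1) := pd_o Φm1 ▸ hΦm1.pd 1
  have sm2 : Smooth4 (pd2 Φm1) := pd_t Φm1 ▸ hΦm1.pd 2
  have sm3 : Smooth4 (pd3 Φm1) := pd_r Φm1 ▸ hΦm1.pd 3
  have hs01 : Smooth4 (srcTerm01 S A φ) := smooth_srcTerm01 hφ hA
  have hs2 : Smooth4 (srcTerm2 S A φ) := smooth_srcTerm2 hφ hA
  have hd3cu : DifferentiableAt ℝ (cu (srcTerm3 S A φ)) (t, x, θ, p) :=
    diff_srcTerm3 hφ hA sθ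
  have hq3 : ∀ t' x' : ℝ, Nop Φ₀ t' x' θ p
      = -M1op Φm1 t' x' θ p + srcTerm01 S A φ t' x' θ p := by
    intro t' x'
    rw [heq3 t' x' θ p hθ hp]
    simp only [srcTerm01]
    try ring
  have hq4 : ∀ θ' ∈ Set.Ioo 0 π, ∀ p' ∈ Set.Ioo 0 (2 * π), Lop Φm1 t x θ' p'
      = ((S.V x : ℝ) : ℂ) * Mbar Φ₀ t x θ' p'
        + srcTerm2 S A φ t x θ' p' + srcTerm3 S A φ t x θ' p' := by
    intro θ' hθ' p' hp'
    rw [heq4 t x θ' p' hθ' hp']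
    simp only [srcTerm2, srcTerm3]
    try ring
  -- Step 1 : L N Φ₀ = ∂t²Φ₀ - ∂x²Φ₀
  have a0 : pd0 (Nop Φ₀) t x θ p = pd0 (pd0 Φ₀) t x θ p - pd0 (pd1 Φ₀) t x θ p := by
    show deriv (fun s => pd0 Φ₀ s x θ p - pd1 Φ₀ s x θ p) t = _
    rw [deriv_fun_sub (sΦ₀0.d0 t x θ p) (sΦ₀1.d0 t x θ p)]
    rfl
  have a1 : pd1 (Nop Φ₀) t x θ p = pd1 (pd0 Φ₀) t x θ p - pd1 (pd1 Φ₀) t x θ p := by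
    show deriv (fun s => pd0 Φ₀ t s θ p - pd1 Φ₀ t s θ p) x = _
    rw [deriv_fun_sub (sΦ₀0.d1 t x θ p) (sΦ₀1.d1 t x θ p)]
    rfl
  have E1 : Lop (Nop Φ₀) t x θ p = pd0 (pd0 Φ₀) t x θ p - pd1 (pd1 Φ₀) t x θ p := by
    show pd0 (Nop Φ₀) t x θ p + pd1 (Nop Φ₀) t x θ p = _
    rw [a0, a1, comm01 hΦ₀ t x θ p]
    ring
  -- slice differentiability of M1op Φm1 in t and x
  have dM1t : DifferentiableAt ℝ (fun s => M1op Φm1 s x θ p) t :=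
    ((sm2.d0 t x θ p).add ((differentiableAt_const _).mul (sm3.d0 t x θ p))).add
      ((differentiableAt_const _).mul (hΦm1.d0 t x θ p))
  have dM1x : DifferentiableAt ℝ (fun s => M1op Φm1 t s θ p) x :=
    ((sm2.d1 t x θ p).add ((differentiableAt_const _).mul (sm3.d1 t x θ p))).add
      ((differentiableAt_const _).mul (hΦm1.d1 t x θ p))
  -- Step 2 : substitute eq3
  have b0 : pd0 (Nop Φ₀) t x θ p
      = -pd0 (M1op Φm1) t x θ p + pd0 (srcTerm01 S A φ) t x θ p := by
    have hfe : (fun s => Nop Φ₀ s x θ p)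
        = fun s => -M1op Φm1 s x θ p + srcTerm01 S A φ s x θ p :=
      funext fun s => hq3 s x
    show deriv (fun s => Nop Φ₀ s x θ p) t = _
    rw [hfe, deriv_fun_add dM1t.fun_neg (hs01.d0 t x θ p), deriv.fun_neg]
    rfl
  have b1 : pd1 (Nop Φ₀) t x θ p
      = -pd1 (M1op Φm1) t x θ p + pd1 (srcTerm01 S A φ) t x θ p := by
    have hfe : (fun s => Nop Φ₀ t s θ p)
        = fun s => -M1op Φm1 t s θ p + srcTerm01 S A φ t s θ p :=
      funext fun s => hq3 t s
    show deriv (fun s => Nop Φ₀ t s θ p) x = _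
    rw [hfe, deriv_fun_add dM1x.fun_neg (hs01.d1 t x θ p), deriv.fun_neg]
    rfl
  -- Step 3 : commute L with M1
  have c0 : pd0 (M1op Φm1) t x θ p = pd0 (pd2 Φm1) t x θ p
      + Complex.I / (Real.sin θ : ℂ) * pd0 (pd3 Φm1) t x θ p
      + ((Real.cos θ / Real.sin θ : ℝ) : ℂ) * pd0 Φm1 t x θ p := by
    show deriv (fun s => pd2 Φm1 s x θ p + Complex.I / (Real.sin θ : ℂ) * pd3 Φm1 s x θ p
        + ((Real.cos θ / Real.sin θ : ℝ) : ℂ) * Φm1 s x θ p) t = _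
    rw [deriv_fun_add ((sm2.d0 t x θ p).fun_add ((differentiableAt_const _).fun_mul (sm3.d0 t x θ p)))
        ((differentiableAt_const _).fun_mul (hΦm1.d0 t x θ p)),
      deriv_fun_add (sm2.d0 t x θ p) ((differentiableAt_const _).fun_mul (sm3.d0 t x θ p)),
      deriv_const_mul _ (sm3.d0 t x θ p), deriv_const_mul _ (hΦm1.d0 t x θ p)]
    rfl
  have c1 : pd1 (M1op Φm1) t x θ p = pd1 (pd2 Φm1) t x θ p
      + Complex.I / (Real.sin θ : ℂ) * pd1 (pd3 Φm1) t x θ p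
      + ((Real.cos θ / Real.sin θ : ℝ) : ℂ) * pd1 Φm1 t x θ p := by
    show deriv (fun s => pd2 Φm1 t s θ p + Complex.I / (Real.sin θ : ℂ) * pd3 Φm1 t s θ p
        + ((Real.cos θ / Real.sin θ : ℝ) : ℂ) * Φm1 t s θ p) x = _
    rw [deriv_fun_add ((sm2.d1 t x θ p).fun_add ((differentiableAt_const _).fun_mul (sm3.d1 t x θ p)))
        ((differentiableAt_const _).fun_mul (hΦm1.d1 t x θ p)),
      deriv_fun_add (sm2.d1 t x θ p) ((differentiableAt_const _).fun_mul (sm3.d1 t x θ p)),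
      deriv_const_mul _ (sm3.d1 t x θ p), deriv_const_mul _ (hΦm1.d1 t x θ p)]
    rfl
  have d2L : pd2 (Lop Φm1) t x θ p
      = pd2 (pd0 Φm1) t x θ p + pd2 (pd1 Φm1) t x θ p := by
    show deriv (fun s => pd0 Φm1 t x s p + pd1 Φm1 t x s p) θ = _
    rw [deriv_fun_add (sm0.d2 t x θ p) (sm1.d2 t x θ p)]
    rfl
  have d3L : pd3 (Lop Φm1) t x θ p
      = pd3 (pd0 Φm1) t x θ p + pd3 (pd1 Φm1) t x θ p := by
    show deriv (fun s => pd0 Φm1 t x θ s + pd1 Φm1 t x θ s) p = _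
    rw [deriv_fun_add (sm0.d3 t x θ p) (sm1.d3 t x θ p)]
    rfl
  have eLm : Lop Φm1 t x θ p = pd0 Φm1 t x θ p + pd1 Φm1 t x θ p := rfl
  have E3 : pd0 (M1op Φm1) t x θ p + pd1 (M1op Φm1) t x θ p
      = M1op (Lop Φm1) t x θ p := by
    have eM : M1op (Lop Φm1) t x θ p = pd2 (Lop Φm1) t x θ p
        + Complex.I / (Real.sin θ : ℂ) * pd3 (Lop Φm1) t x θ p
        + ((Real.cos θ / Real.sin θ : ℝ) : ℂ) * Lop Φm1 t x θ p := rfl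
    rw [eM, d2L, d3L, eLm, c0, c1, comm02 hΦm1 t x θ p, comm03 hΦm1 t x θ p,
      comm12 hΦm1 t x θ p, comm13 hΦm1 t x θ p]
    ring
  -- Step 4 : substitute eq4 inside M1
  have hdivsin : DifferentiableAt ℝ (fun s : ℝ => Complex.I / (Real.sin s : ℂ)) θ := by
    have hsC : HasDerivAt (fun s : ℝ => ((Real.sin s : ℝ) : ℂ)) ((Real.cos θ : ℝ) : ℂ) θ :=
      (Real.hasDerivAt_sin θ).ofReal_comp
    exact ((hasDerivAt_const θ Complex.I).div hsC sθC).differentiableAt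
  have dMb2 : DifferentiableAt ℝ (fun s => Mbar Φ₀ t x s p) θ :=
    (sΦ₀2.d2 t x θ p).sub (hdivsin.mul (sΦ₀3.d2 t x θ p))
  have dMb3 : DifferentiableAt ℝ (fun s => Mbar Φ₀ t x θ s) p :=
    (sΦ₀2.d3 t x θ p).sub ((differentiableAt_const _).mul (sΦ₀3.d3 t x θ p))
  have g2 : pd2 (Lop Φm1) t x θ p = ((S.V x : ℝ) : ℂ) * pd2 (Mbar Φ₀) t x θ p
      + pd2 (srcTerm2 S A φ) t x θ p + pd2 (srcTerm3 S A φ) t x θ p := by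
    have hev : (fun s => Lop Φm1 t x s p) =ᶠ[nhds θ]
        (fun s => ((S.V x : ℝ) : ℂ) * Mbar Φ₀ t x s p
          + srcTerm2 S A φ t x s p + srcTerm3 S A φ t x s p) :=
      Filter.eventuallyEq_of_mem (isOpen_Ioo.mem_nhds hθ) (fun s hs => hq4 s hs p hp)
    show deriv (fun s => Lop Φm1 t x s p) θ = _
    rw [hev.deriv_eq,
      deriv_fun_add (((differentiableAt_const _).fun_mul dMb2).fun_add (hs2.d2 t x θ p)) (diffAt_d2 hd3cu),
      deriv_fun_add ((differentiableAt_const _).fun_mul dMb2) (hs2.d2 t x θ p),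
      deriv_const_mul _ dMb2]
    rfl
  have g3 : pd3 (Lop Φm1) t x θ p = ((S.V x : ℝ) : ℂ) * pd3 (Mbar Φ₀) t x θ p
      + pd3 (srcTerm2 S A φ) t x θ p + pd3 (srcTerm3 S A φ) t x θ p := by
    have hev : (fun s => Lop Φm1 t x θ s) =ᶠ[nhds p]
        (fun s => ((S.V x : ℝ) : ℂ) * Mbar Φ₀ t x θ s
          + srcTerm2 S A φ t x θ s + srcTerm3 S A φ t x θ s) :=
      Filter.eventuallyEq_of_mem (isOpen_Ioo.mem_nhds hp) (fun s hs => hq4 θ hθ s hs)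
    show deriv (fun s => Lop Φm1 t x θ s) p = _
    rw [hev.deriv_eq,
      deriv_fun_add (((differentiableAt_const _).fun_mul dMb3).fun_add (hs2.d3 t x θ p)) (diffAt_d3 hd3cu),
      deriv_fun_add ((differentiableAt_const _).fun_mul dMb3) (hs2.d3 t x θ p),
      deriv_const_mul _ dMb3]
    rfl
  have E4 : M1op (Lop Φm1) t x θ p
      = ((S.V x : ℝ) : ℂ) * M1op (Mbar Φ₀) t x θ p
        + M1op (srcTerm2 S A φ) t x θ p + M1op (srcTerm3 S A φ) t x θ p := by
    have eM : ∀ w : CField, M1op w t x θ p = pd2 w t x θ p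
        + Complex.I / (Real.sin θ : ℂ) * pd3 w t x θ p
        + ((Real.cos θ / Real.sin θ : ℝ) : ℂ) * w t x θ p := fun w => rfl
    rw [eM (Lop Φm1), eM (Mbar Φ₀), eM (srcTerm2 S A φ), eM (srcTerm3 S A φ),
      g2, g3, hq4 θ hθ p hp]
    ring
  have E5 : M1op (Mbar Φ₀) t x θ p = lapS Φ₀ t x θ p := M1Mbar hΦ₀ sθ
  have eLN : Lop (Nop Φ₀) t x θ p = pd0 (Nop Φ₀) t x θ p + pd1 (Nop Φ₀) t x θ p := rfl
  show pd0 (pd0 Φ₀) t x θ p - pd1 (pd1 Φ₀) t x θ p + ((S.V x : ℝ) : ℂ) * lapS Φ₀ t x θ p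
      = -M1op (srcTerm2 S A φ) t x θ p - M1op (srcTerm3 S A φ) t x θ p
        + (pd0 (srcTerm01 S A φ) t x θ p + pd1 (srcTerm01 S A φ) t x θ p)
  linear_combination -E1 + eLN + b0 + b1 - E3 - E4 - ((S.V x : ℝ) : ℂ) * E5
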